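/- arXiv:2308.01027 — 3 statements merged into one kernel-verified Lean document; each statement's English description precedes it below -/
import Mathlib

section
/- Let (F_n) be a sequence of random cumulative distribution functions on ℝ and F a continuous-or-not cumulative distribution function such that for every fixed x ∈ ℝ, F_n(x) → F(x) in probability and F_n(x⁻) → F(x⁻) in probability (where g(x⁻) denotes the left limit of g at x). Then sup_{x ∈ ℝ} |F_n(x) − F(x)| converges to 0 in probability. -/
/-!
For `η > 0`, finitely many quantile points `q₀, …, qₙ` of `F` cut `ℝ` into brackets
`(-∞, q₀)`, `[qⱼ, qⱼ₊₁)`, `[qₙ, ∞)` on each of which `F` increases by at most `η`, measured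
from `F` at the left end to the left limit `F(·⁻)` at the right end. By monotonicity, a
distribution function `G` that is `δ`-close to `F` at every `qᵢ` and every `qᵢ⁻` is then
`(δ + η)`-close to `F` everywhere. So the event that the Kolmogorov distance is at least `ε`
lies in a finite union of events `{ε/2 ≤ |Fₙ(qᵢ) - F(qᵢ)|}`, `{ε/2 ≤ |Fₙ(qᵢ⁻) - F(qᵢ⁻)|}`,
each of vanishing probability.
-/

open MeasureTheory Filter Function Set Topology

theorem abs_sub_le_of_mem_Icc {f g lf uf lg ug δ η : ℝ} (hf : f ∈ Icc lf uf)
    (hg : g ∈ Icc lg ug) (hl : |lg - lf| ≤ δ) (hu : |ug - uf| ≤ δ) (hη : uf - lf ≤ η) :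
    |g - f| ≤ δ + η := by
  rw [abs_le] at hl hu
  rw [abs_sub_le_iff]
  constructor <;> linarith [hf.1, hf.2, hg.1, hg.2]

theorem lt_or_exists_mem_Ico_or_le {α : Type*} [LinearOrder α] (q : ℕ → α) (x : α) (n : ℕ) :
    x < q 0 ∨ (∃ j < n, x ∈ Ico (q j) (q (j + 1))) ∨ q n ≤ x := by
  induction n with
  | zero => exact (lt_or_ge x (q 0)).imp_right Or.inr
  | succ n ih =>
    rcases ih with hx | ⟨j, hj, hxj⟩ | hx
    · exact Or.inl hx
    · exact Or.inr (Or.inl ⟨j, hj.trans n.lt_succ_self, hxj⟩)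
    · rcases lt_or_ge x (q (n + 1)) with hx' | hx'
      · exact Or.inr (Or.inl ⟨n, n.lt_succ_self, hx, hx'⟩)
      · exact Or.inr (Or.inr hx')

def IsBracketing (F : ℝ → ℝ) (η : ℝ) (q : ℕ → ℝ) (n : ℕ) : Prop :=
  leftLim F (q 0) ≤ η ∧ (∀ j < n, leftLim F (q (j + 1)) - F (q j) ≤ η) ∧ 1 - F (q n) ≤ η

section Bracketing

variable {F : ℝ → ℝ} (hF : Monotone F) (hF_rc : ∀ x, ContinuousWithinAt F (Ici x) x)
  (hF_bot : Tendsto F atBot (𝓝 0)) (hF_top : Tendsto F atTop (𝓝 1))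
include hF hF_rc hF_bot hF_top

theorem Monotone.exists_leftLim_le_le_apply {t : ℝ} (ht : t ∈ Ioo 0 1) :
    ∃ x, leftLim F x ≤ t ∧ t ≤ F x := by
  set S := {y | t ≤ F y}
  have hS : S.Nonempty := (hF_top.eventually (eventually_ge_nhds ht.2)).exists
  obtain ⟨b, hb⟩ := (hF_bot.eventually (eventually_lt_nhds ht.1)).exists
  have hS_bdd : BddBelow S :=
    ⟨b, fun y hy => le_of_not_gt fun hyb => (hF hyb.le).not_gt (hb.trans_le hy)⟩
  refine ⟨sInf S, ?_, ?_⟩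
  · refine _root_.le_of_tendsto (hF.tendsto_leftLim _) ?_
    filter_upwards [self_mem_nhdsWithin] with y hy
    exact le_of_not_ge fun hty => (csInf_le hS_bdd hty).not_gt hy
  · have hF_right : Tendsto F (𝓝[>] sInf S) (𝓝 (F (sInf S))) :=
      (hF_rc _).mono_left (nhdsWithin_mono _ Ioi_subset_Ici_self)
    refine _root_.ge_of_tendsto hF_right ?_
    filter_upwards [self_mem_nhdsWithin] with y hy
    obtain ⟨z, hz, hzy⟩ := exists_lt_of_csInf_lt hS hy
    exact hz.trans (hF hzy.le)

/-- The bracketing points are the quantiles of `F` at the levels `(i + 1) / (n + 2)`. -/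
theorem Monotone.exists_isBracketing {η : ℝ} (hη : 0 < η) : ∃ n q, IsBracketing F η q n := by
  obtain ⟨n, hn⟩ := exists_nat_one_div_lt hη
  choose! Q hQ using fun t (ht : t ∈ Ioo 0 1) =>
    hF.exists_leftLim_le_le_apply hF_rc hF_bot hF_top ht
  set level : ℕ → ℝ := fun i => (i + 1) / (n + 2)
  have hlevel : ∀ i ≤ n, level i ∈ Ioo 0 1 := fun i hi => by
    have : (i : ℝ) ≤ n := by exact_mod_cast hi
    constructor
    · positivity
    · rw [div_lt_one (by positivity)]; linarith
  have hstep : 1 / ((n : ℝ) + 2) ≤ η :=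
    (one_div_le_one_div_of_le (by positivity) (by linarith)).trans hn.le
  refine ⟨n, Q ∘ level, ?_, fun j hj => ?_, ?_⟩
  · have := (hQ _ (hlevel 0 n.zero_le)).1
    simp only [comp_apply, level, CharP.cast_eq_zero, zero_add] at this ⊢
    linarith
  · have h₁ := (hQ _ (hlevel (j + 1) hj)).1
    have h₀ := (hQ _ (hlevel j hj.le)).2
    have : level (j + 1) - level j = 1 / ((n : ℝ) + 2) := by
      simp only [level]; push_cast; field_simp; ring
    simp only [comp_apply] at h₀ h₁ ⊢
    linarith
  · have h₀ := (hQ _ (hlevel n le_rfl)).2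
    have : 1 - level n = 1 / ((n : ℝ) + 2) := by
      simp only [level]; field_simp; ring
    simp only [comp_apply] at h₀ ⊢
    linarith

end Bracketing

theorem abs_sub_le_of_isBracketing {F G : ℝ → ℝ} (hF : Monotone F) (hG : Monotone G)
    (hF_bot : Tendsto F atBot (𝓝 0)) (hF_top : Tendsto F atTop (𝓝 1))
    (hG_bot : Tendsto G atBot (𝓝 0)) (hG_top : Tendsto G atTop (𝓝 1))
    {η δ : ℝ} {q : ℕ → ℝ} {n : ℕ} (hq : IsBracketing F η q n)
    (hclose : ∀ i ≤ n, |G (q i) - F (q i)| ≤ δ ∧ |leftLim G (q i) - leftLim F (q i)| ≤ δ)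
    (x : ℝ) : |G x - F x| ≤ δ + η := by
  obtain ⟨hfirst, hmid, hlast⟩ := hq
  have hδ : |(0 : ℝ) - 0| ≤ δ ∧ |(1 : ℝ) - 1| ≤ δ := by
    simpa using (abs_nonneg _).trans (hclose 0 n.zero_le).1
  rcases lt_or_exists_mem_Ico_or_le q x n with hx | ⟨j, hj, hxj⟩ | hx
  · exact abs_sub_le_of_mem_Icc ⟨hF.le_of_tendsto hF_bot x, hF.le_leftLim hx⟩
      ⟨hG.le_of_tendsto hG_bot x, hG.le_leftLim hx⟩ hδ.1 (hclose 0 n.zero_le).2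
      (by simpa using hfirst)
  · exact abs_sub_le_of_mem_Icc ⟨hF hxj.1, hF.le_leftLim hxj.2⟩ ⟨hG hxj.1, hG.le_leftLim hxj.2⟩
      (hclose j hj.le).1 (hclose (j + 1) hj).2 (hmid j hj)
  · exact abs_sub_le_of_mem_Icc ⟨hF hx, hF.ge_of_tendsto hF_top x⟩
      ⟨hG hx, hG.ge_of_tendsto hG_top x⟩ (hclose n le_rfl).1 hδ.2 hlast

section Measure

variable {Ω : Type*} [MeasurableSpace Ω] {μ : Measure Ω} {α : Type*} {l : Filter α}

theorem tendsto_measure_union_zero {A B : α → Set Ω} (hA : Tendsto (fun a => μ (A a)) l (𝓝 0))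
    (hB : Tendsto (fun a => μ (B a)) l (𝓝 0)) :
    Tendsto (fun a => μ (A a ∪ B a)) l (𝓝 0) :=
  tendsto_of_tendsto_of_tendsto_of_le_of_le tendsto_const_nhds (by simpa using hA.add hB)
    (fun _ => zero_le) fun _ => measure_union_le _ _

theorem tendsto_measure_zero_of_subset_biUnion {ι : Type*} (s : Finset ι) {A : α → Set Ω}
    {B : α → ι → Set Ω} (hAB : ∀ a, A a ⊆ ⋃ i ∈ s, B a i)
    (hB : ∀ i ∈ s, Tendsto (fun a => μ (B a i)) l (𝓝 0)) :
    Tendsto (fun a => μ (A a)) l (𝓝 0) :=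
  tendsto_of_tendsto_of_tendsto_of_le_of_le tendsto_const_nhds
    (by simpa using tendsto_finsetSum s hB) (fun _ => zero_le)
    fun a => (measure_mono (hAB a)).trans (measure_biUnion_finset_le s _)

end Measure

theorem glivenko_cantelli_in_probability_general
    {Ω : Type*} [MeasurableSpace Ω] (μ : Measure Ω)
    (Fn : ℕ → Ω → ℝ → ℝ) (F : ℝ → ℝ)
    (hFn_mono : ∀ n ω, Monotone (Fn n ω))
    (hFn_bot : ∀ n ω, Tendsto (Fn n ω) atBot (nhds 0))
    (hFn_top : ∀ n ω, Tendsto (Fn n ω) atTop (nhds 1))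
    (hF_mono : Monotone F)
    (hF_rc : ∀ x, ContinuousWithinAt F (Set.Ici x) x)
    (hF_bot : Tendsto F atBot (nhds 0))
    (hF_top : Tendsto F atTop (nhds 1))
    (h_pt : ∀ x : ℝ, ∀ ε > 0,
      Tendsto (fun n => μ {ω | ε ≤ |Fn n ω x - F x|}) atTop (nhds 0))
    (h_left : ∀ x : ℝ, ∀ ε > 0,
      Tendsto (fun n => μ {ω | ε ≤ |leftLim (Fn n ω) x - leftLim F x|}) atTop (nhds 0)) :
    ∀ ε > 0,
      Tendsto (fun n => μ {ω | ε ≤ ⨆ x : ℝ, |Fn n ω x - F x|}) atTop (nhds 0) := by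
  intro ε hε
  obtain ⟨N, q, hq⟩ := hF_mono.exists_isBracketing hF_rc hF_bot hF_top (by positivity : 0 < ε / 4)
  refine tendsto_measure_zero_of_subset_biUnion (Finset.range (N + 1)) (fun n ω hω => ?_)
    fun i _ =>
      tendsto_measure_union_zero (h_pt (q i) _ (half_pos hε)) (h_left (q i) _ (half_pos hε))
  by_contra hnot
  simp only [Set.mem_iUnion, Set.mem_union, Set.mem_ofPred_eq, Finset.mem_range,
    Nat.lt_succ_iff, not_exists, not_or, not_le] at hnot
  have hsup : ⨆ x, |Fn n ω x - F x| ≤ ε / 2 + ε / 4 :=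
    ciSup_le <| abs_sub_le_of_isBracketing hF_mono (hFn_mono n ω) hF_bot hF_top (hFn_bot n ω)
      (hFn_top n ω) hq fun i hi => ⟨(hnot i hi).1.le, (hnot i hi).2.le⟩
  linarith [show ε ≤ ⨆ x, |Fn n ω x - F x| from hω]

/-- Lemma 5 (Glivenko–Cantelli in probability): if a sequence of random
distribution functions converges pointwise in probability to a distribution
function `F`, both at each point and at each left limit, then the Kolmogorov
distance converges to `0` in probability. -/
theorem glivenko_cantelli_in_probability
    {Ω : Type*} [MeasurableSpace Ω] (μ : Measure Ω) [IsProbabilityMeasure μ]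
    (Fn : ℕ → Ω → ℝ → ℝ) (F : ℝ → ℝ)
    (hFn_meas : ∀ n x, Measurable fun ω => Fn n ω x)
    (hFn_mono : ∀ n ω, Monotone (Fn n ω))
    (hFn_rc : ∀ n ω x, ContinuousWithinAt (Fn n ω) (Set.Ici x) x)
    (hFn_bot : ∀ n ω, Tendsto (Fn n ω) atBot (nhds 0))
    (hFn_top : ∀ n ω, Tendsto (Fn n ω) atTop (nhds 1))
    (hF_mono : Monotone F)
    (hF_rc : ∀ x, ContinuousWithinAt F (Set.Ici x) x)
    (hF_bot : Tendsto F atBot (nhds 0))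
    (hF_top : Tendsto F atTop (nhds 1))
    (h_pt : ∀ x : ℝ, ∀ ε > 0,
      Tendsto (fun n => μ {ω | ε ≤ |Fn n ω x - F x|}) atTop (nhds 0))
    (h_left : ∀ x : ℝ, ∀ ε > 0,
      Tendsto (fun n => μ {ω | ε ≤ |leftLim (Fn n ω) x - leftLim F x|}) atTop (nhds 0)) :
    ∀ ε > 0,
      Tendsto (fun n => μ {ω | ε ≤ ⨆ x : ℝ, |Fn n ω x - F x|}) atTop (nhds 0) :=
  glivenko_cantelli_in_probability_general μ Fn F hFn_mono hFn_bot hFn_top hF_mono hF_rc hF_bot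
    hF_top h_pt h_left
end

section
/- Let h : S^m → ℝ be a symmetric measurable kernel with |h| ≤ 1, W_1, …, W_n i.i.d. S-valued random variables with m ≤ n, and V_{m,n} the associated V-statistic (average over all n^m tuples with repetition). If m² ≤ n (so that m = o(√n) holds along the sequence), then Var(V_{m,n}) ≤ 2m/n + 2m²/n³ + 4m²/n² + 8m³/n³. -/
/-!
Hoeffding's block argument. Cut the indices into `b = ⌊n/m⌋` disjoint blocks of `m` consecutive
indices. Averaging over all permutations `π` of the indices writes the V-statistic as the average
over `π` of `b⁻¹ ∑ⱼ K π j`, where `K π j` is a weighted average of `h` over the `m`-tuples drawn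
from the `j`-th block moved by `π`; the weights sum to one and correct for the different frequencies
of the coincidence patterns of a tuple inside one block and inside all of `{0, …, n-1}`. For fixed
`π` the `K π j` are bounded by `1` and depend on disjoint sets of the independent `W`'s, so their
average has variance at most `1/b`. Variance is convex, hence `Var V ≤ 1/⌊n/m⌋ ≤ 2m/n`.
-/

open Finset Equiv MeasureTheory ProbabilityTheory
open scoped Nat

section GroupAction

variable (G : Type*) {X P : Type*} [Group G] [MulAction G X]

noncomputable def smulFiberCard (ι : P → X) (x : X) : ℕ :=
  Nat.card {q : G × P // q.1 • ι q.2 = x}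

variable {G}

lemma smulFiberCard_smul (ι : P → X) (g : G) (x : X) :
    smulFiberCard G ι (g • x) = smulFiberCard G ι x :=
  Nat.card_congr <| ((Equiv.mulLeft g⁻¹).prodCongr (Equiv.refl P)).subtypeEquiv fun q => by
    simp [mul_smul, inv_smul_eq_iff]

variable [Fintype G] [Fintype X] [Fintype P]

theorem sum_sum_div_smulFiberCard {ι : P → X} (hι : ∀ x, ∃ g : G, ∃ p, g • ι p = x)
    (f : X → ℝ) :
    ∑ g : G, ∑ p, f (g • ι p) / smulFiberCard G ι (ι p) = ∑ x, f x := by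
  classical
  have hcard (x : X) : #{q : G × P | q.1 • ι q.2 = x} = smulFiberCard G ι x := by
    rw [smulFiberCard, Nat.card_eq_fintype_card, Fintype.card_subtype]
  have hpos (x : X) : (smulFiberCard G ι x : ℝ) ≠ 0 := by
    obtain ⟨g, p, rfl⟩ := hι x
    have : Nonempty {q : G × P // q.1 • ι q.2 = g • ι p} := ⟨⟨(g, p), rfl⟩⟩
    exact_mod_cast Nat.card_pos.ne'
  calc ∑ g : G, ∑ p, f (g • ι p) / smulFiberCard G ι (ι p)
      = ∑ q : G × P, f (q.1 • ι q.2) / smulFiberCard G ι (q.1 • ι q.2) := by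
        simp only [smulFiberCard_smul, Fintype.sum_prod_type]
    _ = ∑ x, ∑ q with q.1 • ι q.2 = x, f x / smulFiberCard G ι x :=
        (sum_fiberwise_of_maps_to (fun q _ => mem_univ _) _).symm.trans
          (sum_congr rfl fun x _ => sum_congr rfl fun q hq => by rw [(mem_filter.mp hq).2])
    _ = ∑ x, f x := by
        refine sum_congr rfl fun x _ => ?_
        rw [sum_const, hcard, nsmul_eq_mul]
        field_simp [hpos x]

end GroupAction

section Patterns

variable {m n b : ℕ} {S : Type*}

lemma exists_perm_smul_castLE_comp (hmn : m ≤ n) (t : Fin m → Fin n) :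
    ∃ (σ : Perm (Fin n)) (p : Fin m → Fin m), σ • (Fin.castLE hmn ∘ p) = t := by
  classical
  obtain ⟨B, htB, hB⟩ : ∃ B : Finset (Fin n), univ.image t ⊆ B ∧ #B = m :=
    exists_superset_card_eq (card_image_le.trans (by simp)) (by simpa using hmn)
  obtain ⟨σ, hσ⟩ := Perm.exists_map_finset_eq B (univ.image (Fin.castLE hmn))
    (by rw [hB, card_image_of_injective _ (Fin.castLE_injective hmn)]; simp)
  have hσt (i : Fin m) : ∃ k, Fin.castLE hmn k = σ (t i) := by
    have := mem_map_of_mem σ.toEmbedding (htB (mem_image_of_mem t (mem_univ i)))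
    simpa [hσ] using this
  choose p hp using hσt
  exact ⟨σ⁻¹, p, funext fun i => by simp [hp]⟩

/-- `p` encodes the coincidence pattern of an `m`-tuple. -/
noncomputable def patternWeight (hmn : m ≤ n) (p : Fin m → Fin m) : ℝ :=
  (n ! : ℝ) / (n ^ m * smulFiberCard (Perm (Fin n)) (Fin.castLE hmn ∘ ·) (Fin.castLE hmn ∘ p))

lemma patternWeight_nonneg (hmn : m ≤ n) (p : Fin m → Fin m) : 0 ≤ patternWeight hmn p := by
  unfold patternWeight; positivity

theorem average_eq_average_perm_patternWeight (hmn : m ≤ n) {e : Fin m → Fin n}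
    (he : Function.Injective e) (f : (Fin m → Fin n) → ℝ) :
    (n ^ m : ℝ)⁻¹ * ∑ t, f t =
      (n ! : ℝ)⁻¹ * ∑ π : Perm (Fin n), ∑ p, patternWeight hmn p * f (fun i => π (e (p i))) := by
  obtain ⟨σ, hσ⟩ := Perm.exists_extending_pair _ _ (Fin.castLE_injective hmn) he
  have hshift : ∑ π : Perm (Fin n), ∑ p, patternWeight hmn p * f (fun i => π (e (p i))) =
      ∑ π : Perm (Fin n), ∑ p, patternWeight hmn p * f (π • (Fin.castLE hmn ∘ p)) :=
    Fintype.sum_equiv (Equiv.mulRight σ) _ _ fun π => by simp only [← hσ]; rfl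
  rw [hshift, ← sum_sum_div_smulFiberCard (G := Perm (Fin n)) (ι := (Fin.castLE hmn ∘ ·))
    (exists_perm_smul_castLE_comp hmn), mul_sum, mul_sum]
  refine sum_congr rfl fun π _ => ?_
  rw [mul_sum, mul_sum]
  refine sum_congr rfl fun p _ => ?_
  rw [patternWeight]
  field_simp

lemma sum_patternWeight (hmn : m ≤ n) : ∑ p, patternWeight hmn p = 1 := by
  have key := average_eq_average_perm_patternWeight hmn (Fin.castLE_injective hmn) fun _ => 1
  have hn : (n : ℝ) ^ m ≠ 0 := by
    rcases Nat.eq_zero_or_pos n with rfl | hn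
    · simp [Nat.le_zero.mp hmn]
    · positivity
  simp only [mul_one, sum_const, card_univ, Fintype.card_fun, Fintype.card_fin,
    Fintype.card_perm, nsmul_eq_mul, Nat.cast_pow] at key
  rw [inv_mul_cancel₀ hn, ← mul_assoc, inv_mul_cancel₀ (by positivity), one_mul] at key
  exact key.symm

noncomputable def patternAverage (hmn : m ≤ n) (h : (Fin m → S) → ℝ) (y : Fin m → S) : ℝ :=
  ∑ p, patternWeight hmn p * h (y ∘ p)

lemma abs_patternAverage_le_one (hmn : m ≤ n) {h : (Fin m → S) → ℝ} (hh : ∀ x, |h x| ≤ 1)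
    (y : Fin m → S) : |patternAverage hmn h y| ≤ 1 :=
  calc |patternAverage hmn h y| ≤ ∑ p, |patternWeight hmn p * h (y ∘ p)| := abs_sum_le_sum_abs _ _
    _ ≤ ∑ p, patternWeight hmn p := sum_le_sum fun p _ => by
        rw [abs_mul, abs_of_nonneg (patternWeight_nonneg hmn p)]
        exact mul_le_of_le_one_right (patternWeight_nonneg hmn p) (hh _)
    _ = 1 := sum_patternWeight hmn

lemma measurable_patternAverage [MeasurableSpace S] (hmn : m ≤ n) {h : (Fin m → S) → ℝ}
    (hh : Measurable h) : Measurable (patternAverage hmn h) :=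
  Finset.measurable_sum _ fun _ _ =>
    (hh.comp (measurable_pi_lambda _ fun _ => measurable_pi_apply _)).const_mul _

def finBlock (hb : b * m ≤ n) (j : Fin b) (i : Fin m) : Fin n :=
  Fin.castLE hb (finProdFinEquiv (j, i))

lemma finBlock_injective (hb : b * m ≤ n) : Function.Injective (Function.uncurry (finBlock hb)) :=
  (Fin.castLE_injective hb).comp finProdFinEquiv.injective

noncomputable def blockAverage (hmn : m ≤ n) (hb : b * m ≤ n) (h : (Fin m → S) → ℝ)
    (y : Fin n → S) : ℝ :=
  (b : ℝ)⁻¹ * ∑ j : Fin b, patternAverage hmn h fun i => y (finBlock hb j i)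

lemma abs_blockAverage_le_one (hmn : m ≤ n) (hb : b * m ≤ n) {h : (Fin m → S) → ℝ}
    (hh : ∀ x, |h x| ≤ 1) (y : Fin n → S) : |blockAverage hmn hb h y| ≤ 1 :=
  calc |blockAverage hmn hb h y|
      ≤ (b : ℝ)⁻¹ * ∑ j : Fin b, |patternAverage hmn h fun i => y (finBlock hb j i)| := by
        rw [blockAverage, abs_mul, abs_of_nonneg (by positivity)]
        gcongr
        exact abs_sum_le_sum_abs _ _
    _ ≤ (b : ℝ)⁻¹ * b := by
        gcongr
        simpa using sum_le_sum fun (j : Fin b) (_ : j ∈ univ) =>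
          abs_patternAverage_le_one hmn hh fun i => y (finBlock hb j i)
    _ ≤ 1 := inv_mul_le_one

lemma measurable_blockAverage [MeasurableSpace S] (hmn : m ≤ n) (hb : b * m ≤ n)
    {h : (Fin m → S) → ℝ} (hh : Measurable h) : Measurable (blockAverage hmn hb h) :=
  (Finset.measurable_sum _ fun _ _ => (measurable_patternAverage hmn hh).comp
    (measurable_pi_lambda _ fun _ => measurable_pi_apply _)).const_mul _

theorem average_eq_average_perm_blockAverage (hmn : m ≤ n) (hb : b * m ≤ n) (hb0 : 0 < b)
    (h : (Fin m → S) → ℝ) (y : Fin n → S) :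
    (n ^ m : ℝ)⁻¹ * ∑ t : Fin m → Fin n, h (y ∘ t) =
      (n ! : ℝ)⁻¹ * ∑ π : Perm (Fin n), blockAverage hmn hb h (y ∘ π) := by
  have hj (j : Fin b) := average_eq_average_perm_patternWeight hmn
    ((finBlock_injective hb).comp (Prod.mk_right_injective j)) fun t => h (y ∘ t)
  calc (n ^ m : ℝ)⁻¹ * ∑ t : Fin m → Fin n, h (y ∘ t)
      = (b : ℝ)⁻¹ * ∑ _j : Fin b, (n ^ m : ℝ)⁻¹ * ∑ t : Fin m → Fin n, h (y ∘ t) := by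
        rw [sum_const, card_univ, Fintype.card_fin, nsmul_eq_mul, ← mul_assoc,
          inv_mul_cancel₀ (by positivity), one_mul]
    _ = (b : ℝ)⁻¹ * ∑ j : Fin b, (n ! : ℝ)⁻¹ * ∑ π : Perm (Fin n), ∑ p,
          patternWeight hmn p * h (y ∘ fun i => π (finBlock hb j (p i))) :=
        congrArg _ (sum_congr rfl fun j _ => hj j)
    _ = _ := by
        simp only [blockAverage, patternAverage, mul_sum]
        rw [sum_comm]
        refine sum_congr rfl fun π _ => sum_congr rfl fun j _ => sum_congr rfl fun p _ => ?_
        exact mul_left_comm _ _ _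

end Patterns

section Variance

variable {Ω : Type*} [MeasurableSpace Ω] {μ : Measure Ω} {ι : Type*} [Fintype ι]
  {X : ι → Ω → ℝ}

lemma two_mul_covariance_le_add_variance [IsFiniteMeasure μ] {Y Z : Ω → ℝ} (hY : MemLp Y 2 μ)
    (hZ : MemLp Z 2 μ) : 2 * cov[Y, Z; μ] ≤ Var[Y; μ] + Var[Z; μ] := by
  have := variance_sub hY hZ
  have := variance_nonneg (Y - Z) μ
  linarith

lemma variance_const_mul_sum (c : ℝ) :
    Var[fun ω => c * ∑ i, X i ω; μ] = c ^ 2 * Var[∑ i, X i; μ] := by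
  simp_rw [← Finset.sum_apply]
  exact variance_const_mul c _ μ

lemma variance_average_le_average_variance [IsFiniteMeasure μ] (hX : ∀ i, MemLp (X i) 2 μ) :
    Var[fun ω => (Fintype.card ι : ℝ)⁻¹ * ∑ i, X i ω; μ] ≤
      (Fintype.card ι : ℝ)⁻¹ * ∑ i, Var[X i; μ] := by
  have hcov : ∑ i, ∑ j, cov[X i, X j; μ] ≤ Fintype.card ι * ∑ i, Var[X i; μ] :=
    calc ∑ i, ∑ j, cov[X i, X j; μ] ≤ ∑ i, ∑ j, (Var[X i; μ] + Var[X j; μ]) / 2 :=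
          sum_le_sum fun i _ => sum_le_sum fun j _ => by
            linarith [two_mul_covariance_le_add_variance (hX i) (hX j)]
      _ = Fintype.card ι * ∑ i, Var[X i; μ] := by
          simp only [add_div, sum_add_distrib, ← sum_div, sum_const, card_univ, nsmul_eq_mul]
          rw [← mul_sum]
          ring
  rw [variance_const_mul_sum, variance_sum hX]
  calc (Fintype.card ι : ℝ)⁻¹ ^ 2 * ∑ i, ∑ j, cov[X i, X j; μ]
      ≤ (Fintype.card ι : ℝ)⁻¹ ^ 2 * (Fintype.card ι * ∑ i, Var[X i; μ]) := by gcongr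
    _ = _ := by
      rcases (Fintype.card ι).eq_zero_or_pos with h | h
      · simp [h]
      · field_simp

lemma variance_average_le_inv_card_of_indepFun [IsProbabilityMeasure μ]
    (hX : ∀ i, Measurable (X i)) (hindep : Pairwise fun i j => IndepFun (X i) (X j) μ)
    (hbdd : ∀ i ω, |X i ω| ≤ 1) :
    Var[fun ω => (Fintype.card ι : ℝ)⁻¹ * ∑ i, X i ω; μ] ≤ (Fintype.card ι : ℝ)⁻¹ := by
  have hvar (i : ι) : Var[X i; μ] ≤ 1 := by
    simpa using variance_le_sq_of_bounded (ae_of_all μ fun ω => abs_le.mp (hbdd i ω))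
      (hX i).aemeasurable
  have hL2 (i : ι) : MemLp (X i) 2 μ :=
    memLp_of_bounded (ae_of_all μ fun ω => abs_le.mp (hbdd i ω)) (hX i).aestronglyMeasurable 2
  rw [variance_const_mul_sum, IndepFun.variance_sum (fun i _ => hL2 i)
    (fun i _ j _ hij => hindep hij)]
  calc (Fintype.card ι : ℝ)⁻¹ ^ 2 * ∑ i, Var[X i; μ]
      ≤ (Fintype.card ι : ℝ)⁻¹ ^ 2 * Fintype.card ι := by
        gcongr
        simpa using sum_le_sum fun i (_ : i ∈ univ) => hvar i
    _ = _ := by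
      rcases (Fintype.card ι).eq_zero_or_pos with h | h
      · simp [h]
      · field_simp

lemma ProbabilityTheory.iIndepFun.indepFun_comp_of_disjoint_range {κ β α₁ α₂ γ₁ γ₂ : Type*}
    [MeasurableSpace β] [MeasurableSpace γ₁] [MeasurableSpace γ₂] [Fintype α₁] [Fintype α₂]
    {W : κ → Ω → β} (hindep : iIndepFun W μ) (hW : ∀ k, Measurable (W k))
    {u : α₁ → κ} {v : α₂ → κ} (huv : Disjoint (Set.range u) (Set.range v))
    {F : (α₁ → β) → γ₁} {G : (α₂ → β) → γ₂} (hF : Measurable F) (hG : Measurable G) :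
    IndepFun (fun ω => F fun a => W (u a) ω) (fun ω => G fun a => W (v a) ω) μ := by
  classical
  have hdisj : Disjoint (univ.image u) (univ.image v) := by
    rw [← disjoint_coe]; simpa using huv
  have hF' : Measurable fun y : univ.image u → β =>
      F fun a => y ⟨u a, mem_image_of_mem u (mem_univ a)⟩ :=
    hF.comp (measurable_pi_lambda _ fun _ => measurable_pi_apply _)
  have hG' : Measurable fun y : univ.image v → β =>
      G fun a => y ⟨v a, mem_image_of_mem v (mem_univ a)⟩ :=
    hG.comp (measurable_pi_lambda _ fun _ => measurable_pi_apply _)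
  exact (hindep.indepFun_finset _ _ hdisj hW).comp hF' hG'

end Variance

section VStatistic

variable {Ω S : Type*} [MeasurableSpace Ω] [MeasurableSpace S] {μ : Measure Ω}
  {W : ℕ → Ω → S} {m n b : ℕ} {h : (Fin m → S) → ℝ}

lemma variance_blockAverage_le [IsProbabilityMeasure μ] (hindep : iIndepFun W μ)
    (hW : ∀ k, Measurable (W k)) (hmn : m ≤ n) (hb : b * m ≤ n) (hmeas : Measurable h)
    (hbdd : ∀ x, |h x| ≤ 1) (π : Perm (Fin n)) :
    Var[fun ω => blockAverage hmn hb h fun k => W (π k) ω; μ] ≤ (b : ℝ)⁻¹ := by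
  have hdisj {j j' : Fin b} (hjj' : j ≠ j') :
      Disjoint (Set.range fun i => (π (finBlock hb j i) : ℕ))
        (Set.range fun i => (π (finBlock hb j' i) : ℕ)) :=
    Set.disjoint_range_iff.mpr fun _ _ hii' => hjj' (congrArg Prod.fst
      (@finBlock_injective _ _ _ hb (j, _) (j', _) (π.injective (Fin.val_injective hii'))))
  simpa [blockAverage] using variance_average_le_inv_card_of_indepFun
    (fun _ => (measurable_patternAverage hmn hmeas).comp (measurable_pi_lambda _ fun _ => hW _))
    (fun _ _ hjj' => hindep.indepFun_comp_of_disjoint_range hW (hdisj hjj')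
      (measurable_patternAverage hmn hmeas) (measurable_patternAverage hmn hmeas))
    (fun _ _ => abs_patternAverage_le_one hmn hbdd _)

end VStatistic

lemma inv_natDiv_le_two_mul_div {m n : ℕ} (hm : 0 < m) (hmn : m ≤ n) :
    ((n / m : ℕ) : ℝ)⁻¹ ≤ 2 * m / n := by
  have hnb : (n : ℝ) ≤ 2 * m * (n / m : ℕ) := by
    have : n < n / m * m + m := Nat.lt_div_mul_add hm
    have : 1 ≤ n / m := Nat.div_pos hmn hm
    exact_mod_cast (by nlinarith : n ≤ 2 * m * (n / m))
  calc ((n / m : ℕ) : ℝ)⁻¹ = 2 * m / (2 * m * (n / m : ℕ)) := by field_simp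
    _ ≤ 2 * m / n := div_le_div_of_nonneg_left (by positivity) (Nat.cast_pos.mpr (by omega)) hnb

theorem vstatistic_variance_bound_general
    {Ω S : Type*} [MeasurableSpace Ω] [MeasurableSpace S]
    (μ : Measure Ω) [IsProbabilityMeasure μ]
    (W : ℕ → Ω → S) (hW : ∀ i, Measurable (W i))
    (hindep : iIndepFun W μ)
    (m n : ℕ) (hm : 1 ≤ m) (hmn : m ≤ n)
    (h : (Fin m → S) → ℝ) (hmeas : Measurable h)
    (hbdd : ∀ x, |h x| ≤ 1)
    (V : Ω → ℝ)
    (hV : ∀ ω, V ω = ((n : ℝ) ^ m)⁻¹ *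
      ∑ t : Fin m → Fin n, h (fun i => W (t i) ω)) :
    variance V μ ≤ 2 * m / n + 2 * (m : ℝ) ^ 2 / (n : ℝ) ^ 3
      + 4 * (m : ℝ) ^ 2 / (n : ℝ) ^ 2 + 8 * (m : ℝ) ^ 3 / (n : ℝ) ^ 3 := by
  have hb : n / m * m ≤ n := Nat.div_mul_le_self n m
  set A : Perm (Fin n) → Ω → ℝ := fun π ω => blockAverage hmn hb h fun k => W (π k) ω
  have hVA : V = fun ω => (Fintype.card (Perm (Fin n)) : ℝ)⁻¹ * ∑ π, A π ω := funext fun ω => by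
    rw [hV, Fintype.card_perm, Fintype.card_fin]
    exact average_eq_average_perm_blockAverage hmn hb (Nat.div_pos hmn hm) h fun k => W k ω
  have hA_L2 (π : Perm (Fin n)) : MemLp (A π) 2 μ :=
    MemLp.of_bound ((measurable_blockAverage hmn hb hmeas).comp
      (measurable_pi_lambda _ fun _ => hW _)).aestronglyMeasurable 1
      (ae_of_all _ fun _ => abs_blockAverage_le_one hmn hb hbdd _)
  have hrest : (0 : ℝ) ≤ 2 * (m : ℝ) ^ 2 / (n : ℝ) ^ 3 + 4 * (m : ℝ) ^ 2 / (n : ℝ) ^ 2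
      + 8 * (m : ℝ) ^ 3 / (n : ℝ) ^ 3 := by positivity
  calc variance V μ
      ≤ (Fintype.card (Perm (Fin n)) : ℝ)⁻¹ * ∑ π, Var[A π; μ] :=
        hVA ▸ variance_average_le_average_variance hA_L2
    _ ≤ (Fintype.card (Perm (Fin n)) : ℝ)⁻¹ * ∑ _π : Perm (Fin n), ((n / m : ℕ) : ℝ)⁻¹ := by
        gcongr with π
        exact variance_blockAverage_le hindep hW hmn hb hmeas hbdd π
    _ = ((n / m : ℕ) : ℝ)⁻¹ := by
        rw [sum_const, card_univ, nsmul_eq_mul, ← mul_assoc, inv_mul_cancel₀ (by positivity),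
          one_mul]
    _ ≤ 2 * m / n := inv_natDiv_le_two_mul_div hm hmn
    _ ≤ _ := by linarith

/-- Variance bound for the V-statistic: if `m² ≤ n` then
`Var(V_{m,n}) ≤ 2m/n + 2m²/n³ + 4m²/n² + 8m³/n³`. -/
theorem vstatistic_variance_bound
    {Ω S : Type*} [MeasurableSpace Ω] [MeasurableSpace S]
    (μ : Measure Ω) [IsProbabilityMeasure μ]
    (W : ℕ → Ω → S) (hW : ∀ i, Measurable (W i))
    (hindep : iIndepFun W μ)
    (ν : Measure S) (hident : ∀ i, Measure.map (W i) μ = ν)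
    (m n : ℕ) (hm : 1 ≤ m) (hmn : m ≤ n) (hm2 : m ^ 2 ≤ n)
    (h : (Fin m → S) → ℝ) (hmeas : Measurable h)
    (hsymm : ∀ (e : Equiv.Perm (Fin m)) (x : Fin m → S), h (x ∘ e) = h x)
    (hbdd : ∀ x, |h x| ≤ 1)
    (V : Ω → ℝ)
    (hV : ∀ ω, V ω = ((n : ℝ) ^ m)⁻¹ *
      ∑ t : Fin m → Fin n, h (fun i => W (t i) ω)) :
    variance V μ ≤ 2 * m / n + 2 * (m : ℝ) ^ 2 / (n : ℝ) ^ 3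
      + 4 * (m : ℝ) ^ 2 / (n : ℝ) ^ 2 + 8 * (m : ℝ) ^ 3 / (n : ℝ) ^ 3 :=
  vstatistic_variance_bound_general μ W hW hindep m n hm hmn h hmeas hbdd V hV
end

section
/- Let F, G be cumulative distribution functions on ℝ, fix ε > 0, and let m₀ be a positive integer with ε/m₀ − 1/m₀² > 0. Define x_{m₀,k} := inf{x : k/m₀ ≤ F(x)} for k = 1, …, m₀. If |G(x_{m₀,k}) − F(x_{m₀,k})| ≤ ½(ε/m₀ − 1/m₀²) and |G(x_{m₀,k}⁻) − F(x_{m₀,k}⁻)| ≤ ½(ε/m₀ − 1/m₀²) for all k, then sup_{x ∈ ℝ} |G(x) − F(x)| ≤ ε. -/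
open Function Filter

/-!
Right-continuity of `F` makes its generalized inverse `φ` satisfy `φ u ≤ x ↔ u ≤ F x`. Let
`η = ½(ε/m₀ - 1/m₀²)` and `k/m₀ ≤ F x < (k+1)/m₀`. Then `x_{m₀,k} ≤ x < x_{m₀,k+1}`, so by
monotonicity `k/m₀ - η ≤ G(x_{m₀,k}) ≤ G x ≤ G(x_{m₀,k+1}⁻) ≤ (k+1)/m₀ + η`, where `0 ≤ G ≤ 1`
replaces the quantile bounds at the two ends. Hence `|G x - F x| ≤ 1/m₀ + η`, and
`η ≤ m₀ η = ε - 1/m₀` gives `1/m₀ + η ≤ ε`.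
-/

noncomputable def genInv (F : ℝ → ℝ) (u : ℝ) : ℝ := sInf {x | u ≤ F x}

section GenInv

variable {F G : ℝ → ℝ} {u x η : ℝ}

lemma bddBelow_setOf_le_apply {a : ℝ} (hF : Monotone F) (hbot : Tendsto F atBot (nhds a))
    (hu : a < u) : BddBelow {x | u ≤ F x} := by
  obtain ⟨y, hy⟩ := (hbot.eventually (gt_mem_nhds hu)).exists
  exact ⟨y, fun z hz => le_of_not_gt fun hzy => (hz.trans (hF hzy.le)).not_gt hy⟩

lemma nonempty_setOf_le_apply {b : ℝ} (htop : Tendsto F atTop (nhds b)) (hu : u < b) :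
    {x | u ≤ F x}.Nonempty :=
  let ⟨y, hy⟩ := (htop.eventually (lt_mem_nhds hu)).exists
  ⟨y, hy.le⟩

lemma le_apply_genInv (hF : Monotone F) (hrc : ∀ x, ContinuousWithinAt F (Set.Ici x) x)
    (hne : {x | u ≤ F x}.Nonempty) (hbdd : BddBelow {x | u ≤ F x}) :
    u ≤ F (genInv F u) := by
  refine ge_of_tendsto ((hrc _).mono_left (nhdsWithin_mono _ Set.Ioi_subset_Ici_self)) ?_
  refine eventually_nhdsWithin_of_forall fun z hz => ?_
  obtain ⟨y, hy, hyz⟩ := (csInf_lt_iff hbdd hne).mp hz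
  exact hy.trans (hF hyz.le)

lemma genInv_le_iff (hF : Monotone F) (hrc : ∀ x, ContinuousWithinAt F (Set.Ici x) x)
    (hne : {x | u ≤ F x}.Nonempty) (hbdd : BddBelow {x | u ≤ F x}) :
    genInv F u ≤ x ↔ u ≤ F x :=
  ⟨fun h => (le_apply_genInv hF hrc hne hbdd).trans (hF h), fun h => csInf_le hbdd h⟩

lemma leftLim_genInv_le (hF : Monotone F) (hbdd : BddBelow {x | u ≤ F x}) :
    leftLim F (genInv F u) ≤ u := by
  refine le_of_tendsto (hF.tendsto_leftLim _) (eventually_nhdsWithin_of_forall fun y hy => ?_)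
  have hy' : y ∉ {x | u ≤ F x} := notMem_of_lt_csInf hy hbdd
  exact (not_le.mp hy').le

lemma sub_le_apply_of_abs_sub_le_at_genInv (hG : Monotone G) (hF : Monotone F)
    (hrc : ∀ x, ContinuousWithinAt F (Set.Ici x) x) (hbdd : BddBelow {x | u ≤ F x})
    (hx : u ≤ F x) (hclose : |G (genInv F u) - F (genInv F u)| ≤ η) : u - η ≤ G x := by
  have hne : {x | u ≤ F x}.Nonempty := ⟨x, hx⟩
  have hle : genInv F u ≤ x := (genInv_le_iff hF hrc hne hbdd).mpr hx
  linarith [le_apply_genInv hF hrc hne hbdd, hG hle, (abs_le.mp hclose).1]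

lemma apply_le_add_of_abs_leftLim_sub_le_at_genInv (hG : Monotone G) (hF : Monotone F)
    (hrc : ∀ x, ContinuousWithinAt F (Set.Ici x) x) (hne : {x | u ≤ F x}.Nonempty)
    (hbdd : BddBelow {x | u ≤ F x}) (hx : F x < u)
    (hclose : |leftLim G (genInv F u) - leftLim F (genInv F u)| ≤ η) : G x ≤ u + η := by
  have hlt : x < genInv F u :=
    lt_of_not_ge fun h => hx.not_ge ((genInv_le_iff hF hrc hne hbdd).mp h)
  linarith [hG.le_leftLim hlt, leftLim_genInv_le hF hbdd, (abs_le.mp hclose).2]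

end GenInv

lemma one_div_add_half_le {m ε : ℝ} (hm : 1 ≤ m) (h : 0 ≤ ε / m - 1 / m ^ 2) :
    1 / m + 1 / 2 * (ε / m - 1 / m ^ 2) ≤ ε := by
  have hmul : m * (ε / m - 1 / m ^ 2) = ε - 1 / m := by field_simp
  linarith [le_mul_of_one_le_left h hm]

lemma mem_Ico_floor_mul_div {m t : ℝ} (hm : 0 < m) (ht : 0 ≤ t) :
    t ∈ Set.Ico (⌊m * t⌋₊ / m) ((⌊m * t⌋₊ + 1) / m) := by
  rw [Set.mem_Ico, div_le_iff₀ hm, lt_div_iff₀ hm, mul_comm t]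
  exact ⟨Nat.floor_le (mul_nonneg hm.le ht), Nat.lt_floor_add_one _⟩

theorem cdf_sup_le_of_close_at_quantiles_general
    (F G : ℝ → ℝ)
    (hF_mono : Monotone F) (hF_rc : ∀ x, ContinuousWithinAt F (Set.Ici x) x)
    (hF_bot : Tendsto F atBot (nhds 0)) (hF_top : Tendsto F atTop (nhds 1))
    (hG_mono : Monotone G)
    (hG_bot : Tendsto G atBot (nhds 0)) (hG_top : Tendsto G atTop (nhds 1))
    (ε : ℝ)
    (m₀ : ℕ) (hm₀ : 1 ≤ m₀) (hεm : ε / m₀ - 1 / (m₀ : ℝ) ^ 2 > 0)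
    (xq : ℕ → ℝ)
    (hxq : ∀ k, xq k = sInf {x : ℝ | (k : ℝ) / m₀ ≤ F x})
    (hclose : ∀ k, 1 ≤ k → k ≤ m₀ →
      |G (xq k) - F (xq k)| ≤ (1 / 2) * (ε / m₀ - 1 / (m₀ : ℝ) ^ 2))
    (hclose_left : ∀ k, 1 ≤ k → k ≤ m₀ →
      |leftLim G (xq k) - leftLim F (xq k)| ≤ (1 / 2) * (ε / m₀ - 1 / (m₀ : ℝ) ^ 2)) :
    ∀ x : ℝ, |G x - F x| ≤ ε := by
  intro x
  replace hxq : ∀ k : ℕ, xq k = genInv F (k / m₀) := hxq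
  have hm : (1 : ℝ) ≤ m₀ := by exact_mod_cast hm₀
  have hm_pos : (0 : ℝ) < m₀ := by positivity
  have hG_nonneg := hG_mono.le_of_tendsto hG_bot x
  set k := ⌊m₀ * F x⌋₊
  obtain ⟨hk_le, hk_lt⟩ := mem_Ico_floor_mul_div hm_pos (hF_mono.le_of_tendsto hF_bot x)
  have hlower : (k : ℝ) / m₀ - 1 / 2 * (ε / m₀ - 1 / (m₀ : ℝ) ^ 2) ≤ G x := by
    rcases Nat.eq_zero_or_pos k with hk | hk
    · simp only [hk, Nat.cast_zero, zero_div, zero_sub]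
      linarith
    have hkm : k ≤ m₀ := by
      have := hk_le.trans (hF_mono.ge_of_tendsto hF_top x)
      exact_mod_cast (div_le_one hm_pos).mp this
    refine sub_le_apply_of_abs_sub_le_at_genInv hG_mono hF_mono hF_rc
      (bddBelow_setOf_le_apply hF_mono hF_bot (by positivity)) hk_le ?_
    simpa only [hxq] using hclose k hk hkm
  have hupper : G x ≤ (k + 1) / m₀ + 1 / 2 * (ε / m₀ - 1 / (m₀ : ℝ) ^ 2) := by
    by_cases hk : ((k : ℝ) + 1) / m₀ < 1
    · have hkm : k + 1 ≤ m₀ := by exact_mod_cast ((div_lt_one hm_pos).mp hk).le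
      refine apply_le_add_of_abs_leftLim_sub_le_at_genInv hG_mono hF_mono hF_rc
        (nonempty_setOf_le_apply hF_top hk)
        (bddBelow_setOf_le_apply hF_mono hF_bot (by positivity)) hk_lt ?_
      simpa only [hxq, Nat.cast_add, Nat.cast_one] using hclose_left (k + 1) (by omega) hkm
    · linarith [hG_mono.ge_of_tendsto hG_top x]
  have hstep := one_div_add_half_le hm hεm.le
  rw [add_div] at hupper hk_lt
  rw [abs_le]
  constructor <;> linarith

/-- Quantitative Glivenko–Cantelli step: if `G` is close to `F` at the quantile points
`x_{m₀,k} = inf{x : k/m₀ ≤ F x}` (and at their left limits) within `½(ε/m₀ - 1/m₀²)`,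
then `G` is uniformly within `ε` of `F`. -/
theorem cdf_sup_le_of_close_at_quantiles
    (F G : ℝ → ℝ)
    (hF_mono : Monotone F) (hF_rc : ∀ x, ContinuousWithinAt F (Set.Ici x) x)
    (hF_bot : Tendsto F atBot (nhds 0)) (hF_top : Tendsto F atTop (nhds 1))
    (hG_mono : Monotone G) (hG_rc : ∀ x, ContinuousWithinAt G (Set.Ici x) x)
    (hG_bot : Tendsto G atBot (nhds 0)) (hG_top : Tendsto G atTop (nhds 1))
    (ε : ℝ) (hε : 0 < ε)
    (m₀ : ℕ) (hm₀ : 1 ≤ m₀) (hεm : ε / m₀ - 1 / (m₀ : ℝ) ^ 2 > 0)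
    (xq : ℕ → ℝ)
    (hxq : ∀ k, xq k = sInf {x : ℝ | (k : ℝ) / m₀ ≤ F x})
    (hclose : ∀ k, 1 ≤ k → k ≤ m₀ →
      |G (xq k) - F (xq k)| ≤ (1 / 2) * (ε / m₀ - 1 / (m₀ : ℝ) ^ 2))
    (hclose_left : ∀ k, 1 ≤ k → k ≤ m₀ →
      |leftLim G (xq k) - leftLim F (xq k)| ≤ (1 / 2) * (ε / m₀ - 1 / (m₀ : ℝ) ^ 2)) :
    ∀ x : ℝ, |G x - F x| ≤ ε :=
  cdf_sup_le_of_close_at_quantiles_general F G hF_mono hF_rc hF_bot hF_top hG_mono hG_bot hG_top ε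
    m₀ hm₀ hεm xq hxq hclose hclose_left
end
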